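/- Let n ≥ 2 and let A be an n×n real Higham² matrix with P = D = I, i.e. A = [[L̂, 0],[−𝟏ᵀ, 1]]·[[Û, u],[0, 2^{n−1}]] where L̂ is the (n−1)×(n−1) lower unitriangular matrix with all strictly lower entries −1, Û is an invertible (n−1)×(n−1) upper triangular matrix, u = (1, 2, 4, …, 2^{n−2})ᵀ, and 𝟏 is the all-ones vector. Fix indices i < j < n and ε ∈ ℝ, and suppose A + ε·e_i e_jᵀ admits an LU factorization with last pivot p_ε^{(i,j)}. If 2^{1−n} + ε·2^{−i}·Σ_{ℓ=1}^{n−j} 2^{−ℓ}·(Û⁻¹)_{j,n−ℓ} ≠ 0, then p_ε^{(i,j)} = 1 / (2^{1−n} + ε·2^{−i}·Σ_{ℓ=1}^{n−j} 2^{−ℓ}·(Û⁻¹)_{j,n−ℓ}). -/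

import Mathlib

open Matrix

/-- `M` is lower triangular with all diagonal entries equal to `1`. -/
def IsLowerUnitri {k : ℕ} (M : Matrix (Fin k) (Fin k) ℝ) : Prop :=
  (∀ i, M i i = 1) ∧ ∀ i j : Fin k, i < j → M i j = 0

/-- `M` is upper triangular. -/
def IsUpperTri {k : ℕ} (M : Matrix (Fin k) (Fin k) ℝ) : Prop :=
  ∀ i j : Fin k, j < i → M i j = 0

/-- The `m × m` lower unitriangular matrix with all strictly lower entries `-1`. -/
def highamLhat (m : ℕ) : Matrix (Fin m) (Fin m) ℝ :=
  Matrix.of fun i j => if j < i then -1 else if i = j then 1 else 0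

/-- The Higham² matrix with `P = D = I` determined by the invertible upper triangular
matrix `Û`, i.e. `A = [[L̂, 0],[-𝟏ᵀ, 1]] * [[Û, u],[0, 2^(n-1)]]` with
`u = (1, 2, …, 2^(n-2))ᵀ`, viewed as an `n × n = (m+1) × (m+1)` matrix. -/
noncomputable def highamA {m : ℕ} (Uhat : Matrix (Fin m) (Fin m) ℝ) :
    Matrix (Fin (m + 1)) (Fin (m + 1)) ℝ :=
  Matrix.reindex finSumFinEquiv finSumFinEquiv
    (Matrix.fromBlocks (highamLhat m) 0 (Matrix.of fun (_ : Fin 1) (_ : Fin m) => (-1 : ℝ))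
        (Matrix.of fun (_ : Fin 1) (_ : Fin 1) => (1 : ℝ)) *
      Matrix.fromBlocks Uhat (Matrix.of fun (k : Fin m) (_ : Fin 1) => (2 : ℝ) ^ (k : ℕ)) 0
        (Matrix.of fun (_ : Fin 1) (_ : Fin 1) => (2 : ℝ) ^ m))

/-! ### Auxiliary lemmas -/

lemma det_unique' {ι : Type*} [Unique ι] (M : Matrix ι ι ℝ) : M.det = M default default :=
  Matrix.det_unique M

/-- The matrix determinant lemma specialized to a `stdBasisMatrix` perturbation. -/
lemma det_add_stdBasis {n : Type*} [Fintype n] [DecidableEq n]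
    (B : Matrix n n ℝ) (hB : IsUnit B.det) (a b : n) (ε : ℝ) :
    (B + Matrix.single a b ε).det = B.det * (1 + ε * B⁻¹ b a) := by
  have h1 : Matrix.single a b ε
      = Matrix.replicateCol (Fin 1) (fun x => if x = a then ε else 0)
        * Matrix.replicateRow (Fin 1) (fun x => if x = b then (1:ℝ) else 0) := by
    ext x y
    simp only [Matrix.mul_apply, Matrix.single, Matrix.replicateCol_apply, Matrix.replicateRow_apply,
      Matrix.of_apply, Finset.sum_const, Finset.card_univ, Fintype.card_fin, one_smul]
    by_cases h : a = x <;> by_cases h2 : b = y <;> simp [h, h2, eq_comm]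
  rw [h1]
  refine (Matrix.det_add_replicateCol_mul_replicateRow (ι := Fin 1) hB _ _).trans ?_
  congr 1
  rw [det_unique']
  simp [Matrix.mul_apply, Matrix.replicateCol_apply, Matrix.replicateRow_apply, Finset.sum_ite_eq',
    mul_comm]

/-- Explicit inverse of `highamLhat`. -/
def Lhatinv (m : ℕ) : Matrix (Fin m) (Fin m) ℝ :=
  Matrix.of fun k i => if (i:ℕ) < (k:ℕ) then 2 ^ ((k:ℕ) - i - 1) else if (k:ℕ) = (i:ℕ) then 1 else 0

lemma linv_term_sum (m j : ℕ) (hj : j < m) :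
    ∑ k ∈ Finset.range m,
      (if (j:ℕ) < k then (2:ℝ) ^ (k - j - 1) else if k = j then 1 else 0)
      = 2 ^ (m - j - 1) := by
  rw [Finset.range_eq_Ico, ← Finset.sum_Ico_consecutive _ (Nat.zero_le (j+1)) (by omega)]
  have h1 : ∑ k ∈ Finset.Ico 0 (j+1),
      (if (j:ℕ) < k then (2:ℝ) ^ (k - j - 1) else if k = j then 1 else 0) = 1 := by
    rw [← Finset.range_eq_Ico, Finset.sum_range_succ]
    rw [if_neg (lt_irrefl j), if_pos rfl]
    rw [Finset.sum_eq_zero fun k hk => by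
      rw [Finset.mem_range] at hk
      rw [if_neg (by omega), if_neg (by omega)]]
    ring
  have h2 : ∑ k ∈ Finset.Ico (j+1) m,
      (if (j:ℕ) < k then (2:ℝ) ^ (k - j - 1) else if k = j then 1 else 0)
      = 2 ^ (m - j - 1) - 1 := by
    rw [Finset.sum_Ico_eq_sum_range]
    have : ∀ t ∈ Finset.range (m - (j+1)),
        (if (j:ℕ) < j+1+t then (2:ℝ) ^ (j+1+t - j - 1) else if j+1+t = j then 1 else 0)
        = 2 ^ t := fun t ht => by rw [if_pos (by omega)]; congr 1; omega
    rw [Finset.sum_congr rfl this, geom_sum_eq (by norm_num)]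
    have : m - (j+1) = m - j - 1 := by omega
    rw [this]; ring
  rw [h1, h2]; ring

lemma lhat_mul_linv (m : ℕ) : highamLhat m * Lhatinv m = 1 := by
  ext a b
  rw [Matrix.mul_apply]
  have hterm : ∀ k : Fin m, highamLhat m a k * Lhatinv m k b
      = (fun k : ℕ => (if k < (a:ℕ) then (-1:ℝ) else if (a:ℕ) = k then 1 else 0) *
          (if (b:ℕ) < k then (2:ℝ) ^ (k - b - 1) else if k = (b:ℕ) then 1 else 0)) (k:ℕ) := by
    intro k
    simp only [highamLhat, Lhatinv, Matrix.of_apply, Fin.lt_def, Fin.ext_iff]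
  rw [Finset.sum_congr rfl fun k _ => hterm k,
    Fin.sum_univ_eq_sum_range (fun k : ℕ => (if k < (a:ℕ) then (-1:ℝ) else if (a:ℕ) = k then 1 else 0) *
          (if (b:ℕ) < k then (2:ℝ) ^ (k - b - 1) else if k = (b:ℕ) then 1 else 0)) m]
  have ha : (a:ℕ) < m := a.isLt
  have hb : (b:ℕ) < m := b.isLt
  rw [Finset.range_eq_Ico, ← Finset.sum_Ico_consecutive _ (Nat.zero_le ((a:ℕ)+1)) (by omega)]
  have h2 : ∑ k ∈ Finset.Ico ((a:ℕ)+1) m,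
      (if k < (a:ℕ) then (-1:ℝ) else if (a:ℕ) = k then 1 else 0) *
        (if (b:ℕ) < k then (2:ℝ) ^ (k - b - 1) else if k = (b:ℕ) then 1 else 0) = 0 :=
    Finset.sum_eq_zero fun k hk => by
      rw [Finset.mem_Ico] at hk
      rw [if_neg (by omega), if_neg (by omega), zero_mul]
  rw [h2, add_zero, ← Finset.range_eq_Ico, Finset.sum_range_succ,
    if_neg (lt_irrefl _), if_pos rfl, one_mul]
  have h3 : ∑ k ∈ Finset.range (a:ℕ),
      (if k < (a:ℕ) then (-1:ℝ) else if (a:ℕ) = k then 1 else 0) *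
        (if (b:ℕ) < k then (2:ℝ) ^ (k - b - 1) else if k = (b:ℕ) then 1 else 0)
      = -∑ k ∈ Finset.range (a:ℕ),
          (if (b:ℕ) < k then (2:ℝ) ^ (k - b - 1) else if k = (b:ℕ) then 1 else 0) := by
    rw [← Finset.sum_neg_distrib]
    exact Finset.sum_congr rfl fun k hk => by
      rw [Finset.mem_range] at hk
      rw [if_pos hk]; ring
  rw [h3]
  rcases lt_trichotomy (a:ℕ) (b:ℕ) with h | h | h
  · rw [if_neg (by omega), if_neg (by omega)]
    rw [Finset.sum_eq_zero fun k hk => by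
      rw [Finset.mem_range] at hk
      rw [if_neg (by omega), if_neg (by omega)]]
    have : (1:Matrix (Fin m) (Fin m) ℝ) a b = 0 :=
      Matrix.one_apply_ne (by simp [Fin.ext_iff]; omega)
    rw [this]; ring
  · rw [if_neg (by omega), if_pos (by omega)]
    rw [Finset.sum_eq_zero fun k hk => by
      rw [Finset.mem_range] at hk
      rw [if_neg (by omega), if_neg (by omega)]]
    have : (1:Matrix (Fin m) (Fin m) ℝ) a b = 1 := by
      rw [show a = b from Fin.ext h, Matrix.one_apply_eq]
    rw [this]; ring
  · rw [if_pos h]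
    have := linv_term_sum (a:ℕ) (b:ℕ) h
    rw [this]
    have : (1:Matrix (Fin m) (Fin m) ℝ) a b = 0 :=
      Matrix.one_apply_ne (by simp [Fin.ext_iff]; omega)
    rw [this]; ring

lemma lhat_inv_eq (m : ℕ) : (highamLhat m)⁻¹ = Lhatinv m :=
  Matrix.inv_eq_right_inv (lhat_mul_linv m)

lemma lhat_det_unit (m : ℕ) : IsUnit (highamLhat m).det := by
  have := congrArg Matrix.det (lhat_mul_linv m)
  rw [Matrix.det_mul, Matrix.det_one] at this
  exact IsUnit.of_mul_eq_one _ this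

lemma upperTri_inv {m : ℕ} {Uhat : Matrix (Fin m) (Fin m) ℝ}
    (hUhat : IsUpperTri Uhat) (hUdet : IsUnit Uhat.det) : IsUpperTri Uhat⁻¹ := by
  letI := Uhat.invertibleOfIsUnitDet hUdet
  intro a b h
  exact Matrix.blockTriangular_inv_of_blockTriangular
    (fun x y (hxy : (y : Fin m) < x) => hUhat x y hxy) h

/-- The LU pivot/determinant splitting. -/
lemma lu_det_split {m : ℕ} (L' U' : Matrix (Fin (m + 1)) (Fin (m + 1)) ℝ)
    (hL' : IsLowerUnitri L') (hU' : IsUpperTri U') :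
    (L' * U').det = ((L' * U').submatrix Fin.castSucc Fin.castSucc).det
      * U' (Fin.last m) (Fin.last m) := by
  have hsub : (L' * U').submatrix Fin.castSucc Fin.castSucc
      = (L'.submatrix Fin.castSucc Fin.castSucc) * (U'.submatrix Fin.castSucc Fin.castSucc) := by
    ext a b
    rw [Matrix.submatrix_apply, Matrix.mul_apply, Matrix.mul_apply, Fin.sum_univ_castSucc]
    rw [hL'.2 _ _ (Fin.castSucc_lt_last a), zero_mul, add_zero]
    rfl
  have hdetU : U'.det = ∏ k, U' k k :=
    Matrix.det_of_upperTriangular (fun a b h => hU' a b h)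
  have hdetL : L'.det = 1 := by
    rw [Matrix.det_of_lowerTriangular L' (fun a b h => hL'.2 a b h)]
    exact Finset.prod_eq_one fun k _ => hL'.1 k
  have hdetU1 : (U'.submatrix Fin.castSucc Fin.castSucc).det
      = ∏ k : Fin m, U' k.castSucc k.castSucc := by
    rw [Matrix.det_of_upperTriangular (M := U'.submatrix Fin.castSucc Fin.castSucc)
      (fun a b (h : b < a) => hU' _ _ (by simpa using h))]
    rfl
  have hdetL1 : (L'.submatrix Fin.castSucc Fin.castSucc).det = 1 := by
    rw [Matrix.det_of_lowerTriangular (L'.submatrix Fin.castSucc Fin.castSucc)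
      (fun a b (h : OrderDual.toDual b < OrderDual.toDual a) => hL'.2 _ _ (by simpa using h))]
    exact Finset.prod_eq_one fun k _ => hL'.1 k.castSucc
  rw [hsub, Matrix.det_mul, Matrix.det_mul, hdetL, hdetL1, hdetU, hdetU1,
    Fin.prod_univ_castSucc]
  ring
lemma higham_submatrix {m : ℕ} (Uhat : Matrix (Fin m) (Fin m) ℝ) (i j : Fin m) (ε : ℝ) :
    (highamA Uhat + Matrix.single i.castSucc j.castSucc ε).submatrix
        Fin.castSucc Fin.castSucc
      = highamLhat m * Uhat + Matrix.single i j ε := by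
  ext a b
  have hsym : ∀ x : Fin m, finSumFinEquiv.symm x.castSucc = (Sum.inl x : Fin m ⊕ Fin 1) :=
    fun x => finSumFinEquiv_symm_apply_castAdd x
  simp only [Matrix.submatrix_apply, Matrix.add_apply, highamA, Matrix.reindex_apply]
  congr 1
  · rw [hsym, hsym, Matrix.mul_apply, Fintype.sum_sum_type]
    simp only [Matrix.fromBlocks_apply₁₁, Matrix.fromBlocks_apply₁₂,
      Matrix.fromBlocks_apply₂₁, Matrix.zero_apply, zero_mul, mul_zero,
      Finset.sum_const_zero, add_zero]
    rw [Matrix.mul_apply]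
  · simp only [Matrix.single, Matrix.of_apply]
    have h1 : i.castSucc = a.castSucc ↔ i = a := Fin.castSucc_inj
    have h2 : j.castSucc = b.castSucc ↔ j = b := Fin.castSucc_inj
    simp [h1, h2]

lemma higham_perturbed_det {m : ℕ} (Uhat : Matrix (Fin m) (Fin m) ℝ)
    (hUhat : IsUpperTri Uhat) (hUdet : IsUnit Uhat.det) (i j : Fin m) (hij : i < j) (ε : ℝ) :
    (highamA Uhat + Matrix.single i.castSucc j.castSucc ε).det
      = (highamLhat m).det * Uhat.det * 2 ^ m := by
  set C : Matrix (Fin 1) (Fin m) ℝ := Matrix.of fun _ _ => (-1:ℝ) with hC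
  set Dm : Matrix (Fin 1) (Fin 1) ℝ := Matrix.of fun _ _ => (1:ℝ) with hD
  set B0 : Matrix (Fin m) (Fin 1) ℝ := Matrix.of fun (k : Fin m) _ => (2:ℝ)^(k:ℕ) with hB0
  set dm : Matrix (Fin 1) (Fin 1) ℝ := Matrix.of fun _ _ => (2:ℝ)^m with hdm
  set Lf := Matrix.fromBlocks (highamLhat m) 0 C Dm with hLf
  set Uf := Matrix.fromBlocks Uhat B0 0 dm with hUf
  have hDone : Dm = 1 := by
    ext a b
    fin_cases a; fin_cases b
    simp [hD, Matrix.one_apply]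
  have h2m : ((2:ℝ)^m) ≠ 0 := by positivity
  have hdinv : dm⁻¹ = Matrix.of fun _ _ => ((2:ℝ)^m)⁻¹ := by
    refine Matrix.inv_eq_right_inv ?_
    ext a b
    fin_cases a; fin_cases b
    rw [Matrix.mul_apply, Fin.sum_univ_one]
    simp [hdm, Matrix.one_apply, mul_inv_cancel₀ h2m]
  have hdetdm : dm.det = 2 ^ m := by rw [Matrix.det_fin_one]; simp [hdm]
  have hLhatunit : IsUnit (highamLhat m) :=
    (Matrix.isUnit_iff_isUnit_det _).mpr (lhat_det_unit m)
  have hDunit : IsUnit Dm := hDone ▸ isUnit_one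
  have hUunit : IsUnit Uhat := (Matrix.isUnit_iff_isUnit_det _).mpr hUdet
  have hdunit : IsUnit dm := (Matrix.isUnit_iff_isUnit_det _).mpr
    (by rw [hdetdm]; exact isUnit_iff_ne_zero.mpr h2m)
  have hLfinv : Lf⁻¹ = Matrix.fromBlocks (Lhatinv m) 0 (-(C * Lhatinv m)) 1 := by
    rw [hLf, Matrix.inv_fromBlocks_zero₁₂_of_isUnit_iff _ _ _ (iff_of_true hLhatunit hDunit),
      lhat_inv_eq, hDone, inv_one, Matrix.one_mul]
  have hUfinv : Uf⁻¹ = Matrix.fromBlocks Uhat⁻¹ (-(Uhat⁻¹ * B0 * dm⁻¹)) 0 dm⁻¹ := by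
    rw [hUf, Matrix.inv_fromBlocks_zero₂₁_of_isUnit_iff _ _ _ (iff_of_true hUunit hdunit)]
  have hgoal : highamA Uhat + Matrix.single i.castSucc j.castSucc ε
      = Matrix.reindex finSumFinEquiv finSumFinEquiv
          (Lf * Uf + Matrix.single (Sum.inl i) (Sum.inl j) ε) := by
    rw [highamA]
    ext x y
    simp only [Matrix.reindex_apply, Matrix.submatrix_apply, Matrix.add_apply]
    congr 1
    simp only [Matrix.single, Matrix.of_apply]
    have h1 : (Sum.inl i : Fin m ⊕ Fin 1) = finSumFinEquiv.symm x ↔ i.castSucc = x := by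
      simp only [Equiv.eq_symm_apply, finSumFinEquiv_apply_left, Fin.castSucc]
    have h2 : (Sum.inl j : Fin m ⊕ Fin 1) = finSumFinEquiv.symm y ↔ j.castSucc = y := by
      simp only [Equiv.eq_symm_apply, finSumFinEquiv_apply_left, Fin.castSucc]
    simp [h1, h2]
  have hdetA0 : (Lf * Uf).det = (highamLhat m).det * Uhat.det * 2 ^ m := by
    rw [Matrix.det_mul, hLf, hUf, Matrix.det_fromBlocks_zero₁₂, Matrix.det_fromBlocks_zero₂₁,
      hDone, Matrix.det_one, hdetdm]
    ring
  have hA0unit : IsUnit (Lf * Uf).det := by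
    rw [hdetA0]
    exact ((lhat_det_unit m).mul hUdet).mul (isUnit_iff_ne_zero.mpr h2m)
  -- the key entry of the inverse vanishes
  have hUti : IsUpperTri Uhat⁻¹ := upperTri_inv hUhat hUdet
  have hentry : (Lf * Uf)⁻¹ (Sum.inl j) (Sum.inl i) = 0 := by
    rw [Matrix.mul_inv_rev, Matrix.mul_apply, Fintype.sum_sum_type, Fin.sum_univ_one]
    rw [hUfinv, hLfinv]
    simp only [Matrix.fromBlocks_apply₁₁, Matrix.fromBlocks_apply₁₂,
      Matrix.fromBlocks_apply₂₁, Matrix.neg_apply]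
    -- compute the (inr 0) pieces
    have hT : (Uhat⁻¹ * B0 * dm⁻¹) j 0 = (∑ k : Fin m, Uhat⁻¹ j k * 2 ^ (k:ℕ)) * ((2:ℝ)^m)⁻¹ := by
      have hUB : (Uhat⁻¹ * B0) j 0 = ∑ k : Fin m, Uhat⁻¹ j k * 2 ^ (k:ℕ) := by
        rw [Matrix.mul_apply]
        exact Finset.sum_congr rfl fun k _ => by simp [hB0]
      rw [Matrix.mul_apply, Fin.sum_univ_one, hUB, hdinv]
      simp only [Matrix.of_apply]
    have hCL : (C * Lhatinv m) 0 i = -(2:ℝ) ^ (m - (i:ℕ) - 1) := by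
      rw [Matrix.mul_apply]
      have : ∀ r : Fin m, C 0 r * Lhatinv m r i = -(Lhatinv m r i) := fun r => by
        simp [hC]
      rw [Finset.sum_congr rfl fun r _ => this r, Finset.sum_neg_distrib]
      congr 1
      have hterm : ∀ r : Fin m, Lhatinv m r i
          = (fun k : ℕ => if (i:ℕ) < k then (2:ℝ) ^ (k - (i:ℕ) - 1)
              else if k = (i:ℕ) then 1 else 0) (r:ℕ) := fun r => by
        simp only [Lhatinv, Matrix.of_apply, Fin.ext_iff]
      rw [Finset.sum_congr rfl fun r _ => hterm r,
        Fin.sum_univ_eq_sum_range (fun k : ℕ => if (i:ℕ) < k then (2:ℝ) ^ (k - (i:ℕ) - 1)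
              else if k = (i:ℕ) then 1 else 0) m]
      exact linv_term_sum m (i:ℕ) i.isLt
    rw [hT, hCL]
    have h2i : ((2:ℝ)^((i:ℕ)+1)) ≠ 0 := by positivity
    have hS2 : ∀ k : Fin m, Uhat⁻¹ j k * Lhatinv m k i
        = Uhat⁻¹ j k * 2 ^ (k:ℕ) * ((2:ℝ)^((i:ℕ)+1))⁻¹ := by
      intro k
      rcases lt_or_ge k j with h | h
      · rw [hUti j k h]; ring
      · have hik : (i:ℕ) < (k:ℕ) := lt_of_lt_of_le hij h
        have hl : Lhatinv m k i = 2 ^ ((k:ℕ) - (i:ℕ) - 1) := by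
          simp only [Lhatinv, Matrix.of_apply]
          rw [if_pos hik]
        have hpow : (2:ℝ) ^ ((k:ℕ) - (i:ℕ) - 1) * 2 ^ ((i:ℕ)+1) = 2 ^ (k:ℕ) := by
          rw [← pow_add]; congr 1; omega
        rw [hl, ← hpow, ← mul_assoc, mul_inv_cancel_right₀ h2i]
    rw [Finset.sum_congr rfl fun k _ => hS2 k, ← Finset.sum_mul]
    have hpow2 : (2:ℝ) ^ (m - (i:ℕ) - 1) * 2 ^ ((i:ℕ)+1) = 2 ^ m := by
      rw [← pow_add]; congr 1; have := i.isLt; omega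
    set T := ∑ k : Fin m, Uhat⁻¹ j k * 2 ^ (k:ℕ) with hTdef
    have key : ((2:ℝ)^m)⁻¹ * 2 ^ (m - (i:ℕ) - 1) = ((2:ℝ)^((i:ℕ)+1))⁻¹ := by
      field_simp
      linear_combination hpow2
    linear_combination -T * key
  rw [hgoal, Matrix.det_reindex_self, det_add_stdBasis _ hA0unit (Sum.inl i) (Sum.inl j) ε,
    hentry, hdetA0]
  ring
lemma S2_eq {m : ℕ} (Uhat : Matrix (Fin m) (Fin m) ℝ) (hUhat : IsUpperTri Uhat)
    (hUdet : IsUnit Uhat.det) (i j : Fin m) (hij : i < j) :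
    ∑ k : Fin m, Uhat⁻¹ j k * Lhatinv m k i
      = (∑ k : Fin m, Uhat⁻¹ j k * 2 ^ (k:ℕ)) * ((2:ℝ)^((i:ℕ)+1))⁻¹ := by
  have hUti := upperTri_inv hUhat hUdet
  have h2i : ((2:ℝ)^((i:ℕ)+1)) ≠ 0 := by positivity
  rw [Finset.sum_mul]
  refine Finset.sum_congr rfl fun k _ => ?_
  rcases lt_or_ge k j with h | h
  · rw [hUti j k h]; ring
  · have hik : (i:ℕ) < (k:ℕ) := lt_of_lt_of_le hij h
    have hl : Lhatinv m k i = 2 ^ ((k:ℕ) - (i:ℕ) - 1) := by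
      simp only [Lhatinv, Matrix.of_apply]; rw [if_pos hik]
    have hpow : (2:ℝ) ^ ((k:ℕ) - (i:ℕ) - 1) * 2 ^ ((i:ℕ)+1) = 2 ^ (k:ℕ) := by
      rw [← pow_add]; congr 1; omega
    rw [hl, ← hpow, ← mul_assoc, mul_inv_cancel_right₀ h2i]

lemma attach_sum_eq {m : ℕ} (hm : 1 ≤ m) (Uhat : Matrix (Fin m) (Fin m) ℝ)
    (hUhat : IsUpperTri Uhat) (hUdet : IsUnit Uhat.det) (j : Fin m) :
    (∑ l ∈ (Finset.Icc 1 (m - (j : ℕ))).attach,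
        ((2 : ℝ) ^ (l : ℕ))⁻¹ *
          Uhat⁻¹ j ⟨m - (l : ℕ), by have := Finset.mem_Icc.mp l.2; omega⟩)
      = (∑ k : Fin m, Uhat⁻¹ j k * 2 ^ (k:ℕ)) * ((2:ℝ)^m)⁻¹ := by
  have hm0 : 0 < m := hm
  have hjm : (j:ℕ) < m := j.isLt
  have hUti := upperTri_inv hUhat hUdet
  have h2m : ((2:ℝ)^m) ≠ 0 := by positivity
  set g : ℕ → ℝ := fun l => ((2:ℝ)^l)⁻¹ * Uhat⁻¹ j ⟨(m - l) % m, Nat.mod_lt _ hm0⟩ with hg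
  set F : ℕ → ℝ := fun k => Uhat⁻¹ j ⟨k % m, Nat.mod_lt _ hm0⟩ * 2^k * ((2:ℝ)^m)⁻¹ with hF
  have step1 : (∑ l ∈ (Finset.Icc 1 (m - (j : ℕ))).attach,
        ((2 : ℝ) ^ (l : ℕ))⁻¹ *
          Uhat⁻¹ j ⟨m - (l : ℕ), by have := Finset.mem_Icc.mp l.2; omega⟩)
      = ∑ l ∈ Finset.Icc 1 (m - (j : ℕ)), g l := by
    rw [← Finset.sum_attach (Finset.Icc 1 (m - (j:ℕ))) g]
    refine Finset.sum_congr rfl fun l _ => ?_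
    have hl := Finset.mem_Icc.mp l.2
    show _ = ((2:ℝ) ^ (l:ℕ))⁻¹ * Uhat⁻¹ j ⟨(m - (l:ℕ)) % m, Nat.mod_lt _ hm0⟩
    refine congrArg (fun z => ((2:ℝ) ^ (l:ℕ))⁻¹ * Uhat⁻¹ j z) (Fin.ext ?_)
    show m - (l:ℕ) = (m - (l:ℕ)) % m
    exact (Nat.mod_eq_of_lt (by omega)).symm
  have step2 : ∑ l ∈ Finset.Icc 1 (m - (j : ℕ)), g l = ∑ k ∈ Finset.Ico (j:ℕ) m, F k := by
    refine Finset.sum_nbij' (fun l => m - l) (fun k => m - k) ?_ ?_ ?_ ?_ ?_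
    · intro a ha
      have h := Finset.mem_Icc.mp ha
      show m - a ∈ Finset.Ico (j:ℕ) m
      rw [Finset.mem_Ico]
      omega
    · intro a ha
      have h := Finset.mem_Ico.mp ha
      show m - a ∈ Finset.Icc 1 (m - (j:ℕ))
      rw [Finset.mem_Icc]
      omega
    · intro a ha
      have h := Finset.mem_Icc.mp ha
      show m - (m - a) = a
      omega
    · intro a ha
      have h := Finset.mem_Ico.mp ha
      show m - (m - a) = a
      omega
    · intro a ha
      have h := Finset.mem_Icc.mp ha
      show ((2:ℝ)^a)⁻¹ * Uhat⁻¹ j ⟨(m - a) % m, Nat.mod_lt _ hm0⟩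
          = Uhat⁻¹ j ⟨(m - a) % m, Nat.mod_lt _ hm0⟩ * 2^(m-a) * ((2:ℝ)^m)⁻¹
      have hpow : (2:ℝ) ^ (m - a) * 2 ^ a = 2 ^ m := by rw [← pow_add]; congr 1; omega
      have h2a : ((2:ℝ)^a) ≠ 0 := by positivity
      have key : (2:ℝ)^(m-a) * ((2:ℝ)^m)⁻¹ = ((2:ℝ)^a)⁻¹ := by
        field_simp
        linear_combination hpow
      rw [mul_assoc, key]
      ring
  have step3 : ∑ k ∈ Finset.Ico (j:ℕ) m, F k = ∑ k ∈ Finset.range m, F k := by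
    rw [Finset.range_eq_Ico, ← Finset.sum_Ico_consecutive _ (Nat.zero_le (j:ℕ)) (le_of_lt hjm)]
    have hz : ∑ k ∈ Finset.Ico 0 (j:ℕ), F k = 0 := by
      refine Finset.sum_eq_zero fun k hk => ?_
      have hk' := Finset.mem_Ico.mp hk
      have hkm : k < m := lt_of_lt_of_le hk'.2 (le_of_lt hjm)
      have hzero : Uhat⁻¹ j ⟨k % m, Nat.mod_lt _ hm0⟩ = 0 := by
        refine hUti j ⟨k % m, Nat.mod_lt _ hm0⟩ ?_
        rw [Fin.lt_def]
        show k % m < (j:ℕ)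
        rw [Nat.mod_eq_of_lt hkm]
        exact hk'.2
      show Uhat⁻¹ j ⟨k % m, Nat.mod_lt _ hm0⟩ * 2^k * ((2:ℝ)^m)⁻¹ = 0
      rw [hzero, zero_mul, zero_mul]
    rw [hz, zero_add]
  have step4 : ∑ k ∈ Finset.range m, F k
      = (∑ k : Fin m, Uhat⁻¹ j k * 2 ^ (k:ℕ)) * ((2:ℝ)^m)⁻¹ := by
    rw [← Fin.sum_univ_eq_sum_range F m, ← Finset.sum_mul]
    refine congrArg (· * ((2:ℝ)^m)⁻¹) ?_
    refine Finset.sum_congr rfl fun k _ => ?_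
    show Uhat⁻¹ j ⟨(k:ℕ) % m, Nat.mod_lt _ hm0⟩ * 2^(k:ℕ) = Uhat⁻¹ j k * 2 ^ (k:ℕ)
    have : (⟨(k:ℕ) % m, Nat.mod_lt _ hm0⟩ : Fin m) = k := Fin.ext (Nat.mod_eq_of_lt k.isLt)
    rw [this]
  rw [step1, step2, step3, step4]
theorem stmt_11 {m : ℕ} (hm : 1 ≤ m)
    (Uhat : Matrix (Fin m) (Fin m) ℝ) (hUhat : IsUpperTri Uhat) (hUdet : IsUnit Uhat.det)
    (i j : Fin m) (hij : i < j) (ε : ℝ)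
    (L' U' : Matrix (Fin (m + 1)) (Fin (m + 1)) ℝ)
    (hL' : IsLowerUnitri L') (hU' : IsUpperTri U')
    (hfact : highamA Uhat + Matrix.single i.castSucc j.castSucc ε = L' * U')
    (hden : ((2 : ℝ) ^ m)⁻¹ + ε * ((2 : ℝ) ^ ((i : ℕ) + 1))⁻¹ *
        (∑ l ∈ (Finset.Icc 1 (m - (j : ℕ))).attach,
            ((2 : ℝ) ^ (l : ℕ))⁻¹ *
              Uhat⁻¹ j ⟨m - (l : ℕ), by have := Finset.mem_Icc.mp l.2; omega⟩) ≠ 0) :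
    U' (Fin.last m) (Fin.last m)
      = 1 / (((2 : ℝ) ^ m)⁻¹ + ε * ((2 : ℝ) ^ ((i : ℕ) + 1))⁻¹ *
          (∑ l ∈ (Finset.Icc 1 (m - (j : ℕ))).attach,
            ((2 : ℝ) ^ (l : ℕ))⁻¹ *
              Uhat⁻¹ j ⟨m - (l : ℕ), by have := Finset.mem_Icc.mp l.2; omega⟩)) := by
  have hA := attach_sum_eq hm Uhat hUhat hUdet j
  rw [hA] at hden ⊢
  set T := ∑ k : Fin m, Uhat⁻¹ j k * 2 ^ (k:ℕ) with hT
  have hc : IsUnit (highamLhat m).det := lhat_det_unit m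
  have h2m : ((2:ℝ)^m) ≠ 0 := by positivity
  have h2i : ((2:ℝ)^((i:ℕ)+1)) ≠ 0 := by positivity
  have hdetM : (L' * U').det = (highamLhat m).det * Uhat.det * 2^m := by
    rw [← hfact]; exact higham_perturbed_det Uhat hUhat hUdet i j hij ε
  have hdetM1 : ((L' * U').submatrix Fin.castSucc Fin.castSucc).det
      = (highamLhat m).det * Uhat.det * (1 + ε * (T * ((2:ℝ)^((i:ℕ)+1))⁻¹)) := by
    rw [← hfact, higham_submatrix]
    have hBU : IsUnit (highamLhat m * Uhat).det := by
      rw [Matrix.det_mul]; exact hc.mul hUdet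
    rw [det_add_stdBasis _ hBU i j ε, Matrix.det_mul]
    have hinv : (highamLhat m * Uhat)⁻¹ j i = T * ((2:ℝ)^((i:ℕ)+1))⁻¹ := by
      rw [Matrix.mul_inv_rev, lhat_inv_eq, Matrix.mul_apply, hT]
      exact S2_eq Uhat hUhat hUdet i j hij
    rw [hinv]
  have hsplit := lu_det_split L' U' hL' hU'
  rw [hdetM, hdetM1] at hsplit
  set D := ((2:ℝ)^m)⁻¹ + ε * ((2:ℝ)^((i:ℕ)+1))⁻¹ * (T * ((2:ℝ)^m)⁻¹) with hD
  have hkey : (1:ℝ) + ε * (T * ((2:ℝ)^((i:ℕ)+1))⁻¹) = 2^m * D := by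
    rw [hD]
    field_simp
  rw [hkey] at hsplit
  have hfactor : (highamLhat m).det * Uhat.det * 2^m ≠ 0 :=
    mul_ne_zero (mul_ne_zero hc.ne_zero hUdet.ne_zero) h2m
  have hcan : D * U' (Fin.last m) (Fin.last m) = 1 := by
    have h1 : (highamLhat m).det * Uhat.det * 2^m * (D * U' (Fin.last m) (Fin.last m))
        = (highamLhat m).det * Uhat.det * 2^m * 1 := by
      rw [mul_one]
      linear_combination -hsplit
    exact mul_left_cancel₀ hfactor h1
  exact eq_one_div_of_mul_eq_one_right hcan
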